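/- Let α : X → 𝒫(Σ_τ × X ⊎ {✓}) be a non-deterministic automaton with silent moves, with x →^σ x' iff (σ,x') ∈ α(x). Define α^*(x) := {(σ,x') | σ ∈ Σ_τ, x ⟹^σ x'} ∪ {✓ | ∃ x', x (→^τ)^* x' and ✓ ∈ α(x')}. Then α^* is the least map β : X → 𝒫(Σ_τ × X ⊎ {✓}) (in the pointwise inclusion order) satisfying e_X ≤ β, α ≤ β and β·β ≤ β, where · is the Kleisli composition of the monad 𝒫(Σ_τ × Id + 1). -/

import Mathlib

-- Labels: `none` is the silent label τ, `some a` is a visible letter of Σ.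
-- A value `Sum.inr ()` plays the role of the termination symbol ✓.

/-- Kleisli composition for the monad `𝒫(Σ_τ × Id + 1)`. -/
def kcompN {A X Y Z : Type*} (g : Y → Set ((Option A × Z) ⊕ Unit))
    (f : X → Set ((Option A × Y) ⊕ Unit)) : X → Set ((Option A × Z) ⊕ Unit) :=
  fun x => {w |
    (∃ σ z, w = Sum.inl (σ, z) ∧ ∃ y,
        (Sum.inl (σ, y) ∈ f x ∧ Sum.inl ((none : Option A), z) ∈ g y) ∨
        (Sum.inl ((none : Option A), y) ∈ f x ∧ Sum.inl (σ, z) ∈ g y)) ∨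
    (w = Sum.inr () ∧ (Sum.inr () ∈ f x ∨
        ∃ y, Sum.inl ((none : Option A), y) ∈ f x ∧ Sum.inr () ∈ g y))}

/-- The unit of the monad `𝒫(Σ_τ × Id + 1)`: `e_X(x) = {(τ,x)}`. -/
def kunitN {A : Type*} (X : Type*) : X → Set ((Option A × X) ⊕ Unit) :=
  fun x => {Sum.inl ((none : Option A), x)}

/-- The pointwise inclusion order on Kleisli maps. -/
def leN {A X Y : Type*} (f g : X → Set ((Option A × Y) ⊕ Unit)) : Prop := ∀ x, f x ⊆ g x

/-- The τ-reachability relation `(→^τ)^*` of the automaton `α`. -/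
def tauStar {X A : Type*} (α : X → Set ((Option A × X) ⊕ Unit)) : X → X → Prop :=
  Relation.ReflTransGen (fun x y => Sum.inl ((none : Option A), y) ∈ α x)

/-- Saturated transition `⟹^σ` of the automaton `α`. -/
def WTrN {X A : Type*} (α : X → Set ((Option A × X) ⊕ Unit)) : Option A → X → X → Prop
  | none => tauStar α
  | some a => fun x y => ∃ u v, tauStar α x u ∧ Sum.inl (some a, v) ∈ α u ∧ tauStar α v y

/-- The saturation `α*` of a non-deterministic automaton with silent moves:
`α*(x) = {(σ,x') | x ⟹^σ x'} ∪ {✓ | ∃ x', x (→^τ)^* x' ∧ ✓ ∈ α(x')}`. -/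
def satN {X A : Type*} (α : X → Set ((Option A × X) ⊕ Unit)) :
    X → Set ((Option A × X) ⊕ Unit) :=
  fun x => {w | (∃ σ x', w = Sum.inl (σ, x') ∧ WTrN α σ x x') ∨
                (w = Sum.inr () ∧ ∃ x', tauStar α x x' ∧ Sum.inr () ∈ α x')}

/-!
`α*` contains `e` and `α`, and it is closed under Kleisli composition because τ-paths can be
absorbed at either end of a saturated transition. Conversely, a `β` containing `e` and `α` and
closed under composition contains every τ-path (by induction along the path), and then, by two
more compositions, every saturated transition `τ* σ τ*` and every `τ* ✓`.
-/

section Kleisli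

variable {A X Y Z : Type*} {g : Y → Set ((Option A × Z) ⊕ Unit)}
  {f : X → Set ((Option A × Y) ⊕ Unit)} {x : X}

theorem inl_mem_kcompN_iff {σ : Option A} {z : Z} :
    Sum.inl (σ, z) ∈ kcompN g f x ↔ ∃ y,
      (Sum.inl (σ, y) ∈ f x ∧ Sum.inl ((none : Option A), z) ∈ g y) ∨
      (Sum.inl ((none : Option A), y) ∈ f x ∧ Sum.inl (σ, z) ∈ g y) := by
  simp [kcompN]

theorem inr_mem_kcompN_iff :
    Sum.inr () ∈ kcompN g f x ↔
      Sum.inr () ∈ f x ∨ ∃ y, Sum.inl ((none : Option A), y) ∈ f x ∧ Sum.inr () ∈ g y := by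
  simp [kcompN]

theorem mem_kcompN_of_tau_mem {y : Y} {w : (Option A × Z) ⊕ Unit}
    (hf : Sum.inl ((none : Option A), y) ∈ f x) (hg : w ∈ g y) : w ∈ kcompN g f x := by
  rcases w with ⟨σ, z⟩ | ⟨⟩
  · exact inl_mem_kcompN_iff.2 ⟨y, .inr ⟨hf, hg⟩⟩
  · exact inr_mem_kcompN_iff.2 (.inr ⟨y, hf, hg⟩)

theorem inl_mem_kcompN_of_mem_tau {σ : Option A} {y : Y} {z : Z}
    (hf : Sum.inl (σ, y) ∈ f x) (hg : Sum.inl ((none : Option A), z) ∈ g y) :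
    Sum.inl (σ, z) ∈ kcompN g f x :=
  inl_mem_kcompN_iff.2 ⟨y, .inl ⟨hf, hg⟩⟩

end Kleisli

section Saturation

variable {X A : Type*} {α : X → Set ((Option A × X) ⊕ Unit)} {σ : Option A} {x y z : X}

theorem WTrN.of_mem (h : Sum.inl (σ, y) ∈ α x) : WTrN α σ x y := by
  cases σ with
  | none => exact .single h
  | some a => exact ⟨x, y, .refl, h, .refl⟩

theorem tauStar.trans_WTrN (h : tauStar α x y) (h' : WTrN α σ y z) : WTrN α σ x z := by
  cases σ with
  | none => exact h.trans h'
  | some a =>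
    obtain ⟨u, v, hyu, huv, hvz⟩ := h'
    exact ⟨u, v, h.trans hyu, huv, hvz⟩

theorem WTrN.trans_tauStar (h : WTrN α σ x y) (h' : tauStar α y z) : WTrN α σ x z := by
  cases σ with
  | none => exact h.trans h'
  | some a =>
    obtain ⟨u, v, hxu, huv, hvy⟩ := h
    exact ⟨u, v, hxu, huv, hvy.trans h'⟩

theorem inl_mem_satN_iff : Sum.inl (σ, y) ∈ satN α x ↔ WTrN α σ x y := by
  simp [satN]

theorem inr_mem_satN_iff :
    Sum.inr () ∈ satN α x ↔ ∃ x', tauStar α x x' ∧ Sum.inr () ∈ α x' := by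
  simp [satN]

theorem kunitN_le_satN : leN (kunitN X) (satN α) := by
  rintro x w rfl
  exact inl_mem_satN_iff.2 Relation.ReflTransGen.refl

theorem le_satN : leN α (satN α) := by
  rintro x (⟨σ, y⟩ | ⟨⟩) h
  · exact inl_mem_satN_iff.2 (.of_mem h)
  · exact inr_mem_satN_iff.2 ⟨x, .refl, h⟩

theorem kcompN_satN_le_satN : leN (kcompN (satN α) (satN α)) (satN α) := by
  rintro x (⟨σ, z⟩ | ⟨⟩)
  · simp only [inl_mem_kcompN_iff, inl_mem_satN_iff]
    rintro ⟨y, ⟨hxy, hyz⟩ | ⟨hxy, hyz⟩⟩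
    · exact hxy.trans_tauStar hyz
    · exact tauStar.trans_WTrN hxy hyz
  · rw [inr_mem_kcompN_iff]
    rintro (h | ⟨y, hxy, hy⟩)
    · exact h
    · have hxy : tauStar α x y := inl_mem_satN_iff.1 hxy
      obtain ⟨x', hyx', hx'⟩ := inr_mem_satN_iff.1 hy
      exact inr_mem_satN_iff.2 ⟨x', hxy.trans hyx', hx'⟩

variable {β : X → Set ((Option A × X) ⊕ Unit)}
  (hunit : leN (kunitN X) β) (hα : leN α β) (hcomp : leN (kcompN β β) β)
include hunit hα hcomp

theorem tau_mem_of_tauStar (h : tauStar α x y) : Sum.inl ((none : Option A), y) ∈ β x := by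
  induction h using Relation.ReflTransGen.head_induction_on with
  | refl => exact hunit _ rfl
  | head hstep _ ih => exact hcomp _ (mem_kcompN_of_tau_mem (hα _ hstep) ih)

theorem inl_mem_of_WTrN (h : WTrN α σ x y) : Sum.inl (σ, y) ∈ β x := by
  cases σ with
  | none => exact tau_mem_of_tauStar hunit hα hcomp h
  | some a =>
    obtain ⟨u, v, hxu, huv, hvy⟩ := h
    have hxv : Sum.inl (some a, v) ∈ β x :=
      hcomp _ (mem_kcompN_of_tau_mem (tau_mem_of_tauStar hunit hα hcomp hxu) (hα _ huv))
    exact hcomp _ (inl_mem_kcompN_of_mem_tau hxv (tau_mem_of_tauStar hunit hα hcomp hvy))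

theorem satN_le : leN (satN α) β := by
  rintro x (⟨σ, y⟩ | ⟨⟩) h
  · exact inl_mem_of_WTrN hunit hα hcomp (inl_mem_satN_iff.1 h)
  · obtain ⟨x', hxx', hx'⟩ := inr_mem_satN_iff.1 h
    exact hcomp _ (mem_kcompN_of_tau_mem (tau_mem_of_tauStar hunit hα hcomp hxx') (hα _ hx'))

end Saturation

/-- `α*` is the least map `β` (pointwise) with `e ≤ β`, `α ≤ β` and `β·β ≤ β`. -/
theorem nda_saturation_least {X A : Type*} (α : X → Set ((Option A × X) ⊕ Unit)) :
    leN (kunitN X) (satN α) ∧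
    leN α (satN α) ∧
    leN (kcompN (satN α) (satN α)) (satN α) ∧
    (∀ β : X → Set ((Option A × X) ⊕ Unit),
      leN (kunitN X) β → leN α β → leN (kcompN β β) β → leN (satN α) β) :=
  ⟨kunitN_le_satN, le_satN, kcompN_satN_le_satN, fun _ hunit hα hcomp => satN_le hunit hα hcomp⟩
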